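/- For every m ≥ 3, the Laurent polynomial V' m is nonzero and maxdeg (V' m) = 5m - 3. (At m = 3 this is the degree 12 of Q₃', and the recurrence increases the top degree by 5 at each step since the second term has strictly smaller degree.) -/

import Mathlib

/-!
`maxdeg` is Mathlib's `LaurentPolynomial.degree`. Over a domain the degree of a product is the
sum of the degrees, so in the recurrence the term `V' m * (z^5 - ⋯)` has degree `(5m - 3) + 5`,
while the correction `U^(m+1) * (z^5 - ⋯)` only has degree `(m + 1) + 5`, smaller once `m ≥ 2`.
The top degree therefore grows by exactly `5` per step, starting from `deg Q₃' = 12`.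
-/

open LaurentPolynomial

noncomputable def U : LaurentPolynomial ℤ := -T 1 - T (-1)

noncomputable def Q3' : LaurentPolynomial ℤ :=
  -T 12 + T 10 + T 6 + 2 * T 4 + 2 * T 2 + 6 + 2 * T (-2) + 2 * T (-4) + T (-6)
    + T (-10) - T (-12)

/-- The maximum exponent in the support of a Laurent polynomial. -/
noncomputable def maxdeg (p : LaurentPolynomial ℤ) : WithBot ℤ := p.coeff.support.max

/-- The minimum exponent in the support of a Laurent polynomial. -/
noncomputable def mindeg (p : LaurentPolynomial ℤ) : WithTop ℤ := p.coeff.support.min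

theorem maxdeg_eq_degree (p : LaurentPolynomial ℤ) : maxdeg p = p.degree := rfl

namespace LaurentPolynomial

section Semiring

variable {R : Type*} [Semiring R] {f g : R[T;T⁻¹]} {n : ℤ}

theorem coeff_eq_zero_of_degree_lt (h : f.degree < n) : f.coeff n = 0 := by
  by_contra hn
  exact (Finset.le_max (Finsupp.mem_support_iff.2 hn)).not_gt h

theorem coeff_ne_zero_of_degree_eq (h : f.degree = n) : f.coeff n ≠ 0 :=
  Finsupp.mem_support_iff.1 (Finset.mem_of_max h)

theorem degree_eq_of_coeff_ne_zero (hn : f.coeff n ≠ 0) (h : ∀ m, n < m → f.coeff m = 0) :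
    f.degree = n := by
  refine le_antisymm (Finset.max_le fun m hm => ?_) (Finset.le_max (Finsupp.mem_support_iff.2 hn))
  by_contra hlt
  exact Finsupp.mem_support_iff.1 hm (h m (WithBot.coe_lt_coe.1 (not_le.1 hlt)))

theorem degree_add_eq_left_of_degree_lt (h : g.degree < f.degree) :
    (f + g).degree = f.degree := by
  obtain ⟨n, hf⟩ := WithBot.ne_bot_iff_exists.1 h.ne_bot
  rw [← hf] at h ⊢
  refine degree_eq_of_coeff_ne_zero ?_ fun m hm => ?_
  · rw [AddMonoidAlgebra.coeff_add, Finsupp.add_apply, coeff_eq_zero_of_degree_lt h, add_zero]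
    exact coeff_ne_zero_of_degree_eq hf.symm
  · have hm : (n : WithBot ℤ) < m := WithBot.coe_lt_coe.2 hm
    rw [AddMonoidAlgebra.coeff_add, Finsupp.add_apply, coeff_eq_zero_of_degree_lt (hf ▸ hm),
      coeff_eq_zero_of_degree_lt (h.trans hm), add_zero]

theorem degree_mul_le (f g : R[T;T⁻¹]) : (f * g).degree ≤ f.degree + g.degree := by
  simpa only [degree, Finset.max_eq_sup_withBot] using
    AddMonoidAlgebra.sup_support_coeff_mul_le (fun a b => (WithBot.coe_add a b).le) f g

theorem degree_mul [NoZeroDivisors R] (f g : R[T;T⁻¹]) :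
    (f * g).degree = f.degree + g.degree := by
  rcases eq_or_ne f 0 with rfl | hf
  · simp
  rcases eq_or_ne g 0 with rfl | hg
  · simp
  obtain ⟨a, ha⟩ := WithBot.ne_bot_iff_exists.1 (degree_eq_bot_iff.not.2 hf)
  obtain ⟨b, hb⟩ := WithBot.ne_bot_iff_exists.1 (degree_eq_bot_iff.not.2 hg)
  refine (degree_mul_le f g).antisymm ?_
  rw [← ha, ← hb, ← WithBot.coe_add]
  refine Finset.le_max (Finsupp.mem_support_iff.2 ?_)
  rw [AddMonoidAlgebra.coeff_mul_add_of_uniqueAdd]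
  · exact mul_ne_zero (coeff_ne_zero_of_degree_eq ha.symm) (coeff_ne_zero_of_degree_eq hb.symm)
  · intro x y hx hy hxy
    have hxa : x ≤ a := WithBot.coe_le_coe.1 (ha ▸ Finset.le_max hx)
    have hyb : y ≤ b := WithBot.coe_le_coe.1 (hb ▸ Finset.le_max hy)
    omega

theorem degree_pow [NoZeroDivisors R] [Nontrivial R] (f : R[T;T⁻¹]) (n : ℕ) :
    (f ^ n).degree = n • f.degree := by
  induction n with
  | zero => simp [← T_zero]
  | succ n ih => rw [pow_succ, degree_mul, ih, succ_nsmul]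

end Semiring

section Ring

variable {R : Type*} [Ring R] {f g : R[T;T⁻¹]}

@[simp]
theorem degree_neg (f : R[T;T⁻¹]) : (-f).degree = f.degree := by
  rw [degree, AddMonoidAlgebra.coeff_neg, Finsupp.support_neg, degree]

theorem degree_sub_eq_left_of_degree_lt (h : g.degree < f.degree) :
    (f - g).degree = f.degree := by
  rw [sub_eq_add_neg, degree_add_eq_left_of_degree_lt (by rwa [degree_neg])]

end Ring

end LaurentPolynomial

theorem degree_U : U.degree = (1 : ℤ) := by
  rw [U, degree_sub_eq_left_of_degree_lt] <;> simp

/- Here and in `degree_recurrence_step`, each side condition `g.degree < f.degree` is discharged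
by the same `simp` call, recursively down the sum. -/
theorem degree_Q3' : Q3'.degree = (12 : ℤ) := by
  rw [Q3', ← map_ofNat C 2, ← map_ofNat C 6, ← mul_one (C 6), ← T_zero]
  simp (maxDischargeDepth := 12) only [degree_add_eq_left_of_degree_lt,
    degree_sub_eq_left_of_degree_lt, degree_neg, degree_T, degree_C_mul_T, ne_eq,
    OfNat.ofNat_ne_zero, not_false_eq_true, WithBot.coe_lt_coe, Int.reduceLT, Int.reduceNeg]

theorem degree_recurrence_step {p : ℤ[T;T⁻¹]} {n : ℕ} (hn : 2 ≤ n)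
    (hp : p.degree = ((5 * n - 3 : ℤ) : WithBot ℤ)) :
    (p * (T 5 - T 3 - T (-3) + T (-5)) -
        U ^ (n + 1) * (T 5 - T 3 - T 1 + T (-1) - T (-3) + T (-5))).degree =
      ((5 * (n + 1 : ℕ) - 3 : ℤ) : WithBot ℤ) := by
  have hF : (T 5 - T 3 - T (-3) + T (-5) : ℤ[T;T⁻¹]).degree = (5 : ℤ) := by
    simp (maxDischargeDepth := 12) only [degree_add_eq_left_of_degree_lt,
      degree_sub_eq_left_of_degree_lt, degree_T, WithBot.coe_lt_coe, Int.reduceLT, Int.reduceNeg]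
  have hG : (T 5 - T 3 - T 1 + T (-1) - T (-3) + T (-5) : ℤ[T;T⁻¹]).degree = (5 : ℤ) := by
    simp (maxDischargeDepth := 12) only [degree_add_eq_left_of_degree_lt,
      degree_sub_eq_left_of_degree_lt, degree_T, WithBot.coe_lt_coe, Int.reduceLT, Int.reduceNeg]
  have hleading :
      (p * (T 5 - T 3 - T (-3) + T (-5))).degree = ((5 * n + 2 : ℤ) : WithBot ℤ) := by
    rw [degree_mul, hp, hF, ← WithBot.coe_add]
    congr 1
    omega
  have hcorrection : (U ^ (n + 1) * (T 5 - T 3 - T 1 + T (-1) - T (-3) + T (-5))).degree =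
      ((n + 6 : ℤ) : WithBot ℤ) := by
    rw [degree_mul, degree_pow, degree_U, hG, ← WithBot.coe_nsmul, ← WithBot.coe_add, nsmul_one]
    congr 1
  rw [degree_sub_eq_left_of_degree_lt, hleading]
  · congr 1
    omega
  · rw [hleading, hcorrection, WithBot.coe_lt_coe]
    omega

/-- For every `m ≥ 3`, `V' m` is nonzero and has top degree `5 * m - 3` in `z`. -/
theorem maxdeg_V' (V' : ℕ → LaurentPolynomial ℤ) (hV3 : V' 3 = Q3')
    (hVrec : ∀ m : ℕ, 3 ≤ m → V' (m + 1) =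
      V' m * (T 5 - T 3 - T (-3) + T (-5)) -
        U ^ (m + 1) * (T 5 - T 3 - T 1 + T (-1) - T (-3) + T (-5))) :
    ∀ m : ℕ, 3 ≤ m →
      V' m ≠ 0 ∧ maxdeg (V' m) = ((5 * (m : ℤ) - 3 : ℤ) : WithBot ℤ) := by
  intro m hm
  have hdeg : (V' m).degree = ((5 * m - 3 : ℤ) : WithBot ℤ) := by
    induction m, hm using Nat.le_induction with
    | base => rw [hV3, degree_Q3']; rfl
    | succ n hn ih => rw [hVrec n hn]; exact degree_recurrence_step (by omega) ih
  refine ⟨fun h0 => ?_, by rw [maxdeg_eq_degree, hdeg]⟩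
  rw [h0, degree_zero] at hdeg
  exact WithBot.bot_ne_coe hdeg
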